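/- Let S be a saw with backbone (v₁, ..., v_{2k+1}, v₁) whose degree satisfies d(S) ≥ 2(2k + 1)/3. Then [2, 2k + 1] ⊆ R_S(v_{2k}, v_{2k+1}). -/

import Mathlib

open SimpleGraph
open Fin.NatCast

/-- `S` is a saw on the vertex set `Fin (2k+1)`: it contains the Hamiltonian backbone
cycle `(0, 1, ..., 2k, 0)` together with the chords `(2t, 2t+2)` for `0 ≤ t < k`
(in 1-based notation, the chords `(v_{2s−1}, v_{2s+1})` for `s ∈ [1, k]`). -/
def IsSawGraph (k : ℕ) (S : SimpleGraph (Fin (2 * k + 1))) : Prop :=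
  (∀ i : Fin (2 * k + 1), S.Adj i (i + 1)) ∧
  (∀ t : ℕ, t < k →
    S.Adj ((2 * t : ℕ) : Fin (2 * k + 1)) ((2 * t + 2 : ℕ) : Fin (2 * k + 1)))

/-- `pathOrders G u v` is the set `R_G(u, v)` of the orders (numbers of vertices) of all
`uv`-paths in `G`. -/
def pathOrders {V : Type*} (G : SimpleGraph V) (u v : V) : Set ℕ :=
  {n | ∃ P : G.Walk u v, P.IsPath ∧ P.length + 1 = n}

namespace SawAux
open SimpleGraph.Walk

variable {k : ℕ} {S : SimpleGraph (Fin (2 * k + 1))}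

lemma adj_succ (hS : IsSawGraph k S) (a : ℕ) :
    S.Adj ((a : ℕ) : Fin (2*k+1)) ((a+1 : ℕ) : Fin (2*k+1)) := by
  have h := hS.1 ((a : ℕ) : Fin (2*k+1))
  have he : ((a : ℕ) : Fin (2*k+1)) + 1 = ((a+1 : ℕ) : Fin (2*k+1)) := by push_cast; ring
  rwa [he] at h

lemma adj_chord (hS : IsSawGraph k S) (a : ℕ) (ha : a % 2 = 0) (h2 : a + 2 ≤ 2*k) :
    S.Adj ((a+2 : ℕ) : Fin (2*k+1)) ((a : ℕ) : Fin (2*k+1)) := by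
  have ht : a / 2 < k := by omega
  have h := hS.2 (a/2) ht
  have h1 : 2 * (a/2) = a := by omega
  rw [h1] at h
  exact h.symm

/-- descending backbone walk from `z+d` to `z`. -/
def bWalk (hS : IsSawGraph k S) (z : ℕ) : (d : ℕ) → S.Walk ((z+d : ℕ) : Fin (2*k+1)) ((z : ℕ) : Fin (2*k+1))
  | 0 => Walk.nil
  | d+1 => Walk.cons (adj_succ hS (z+d)).symm (bWalk hS z d)

/-- descending chord walk from `z+2c` to `z` (z even, z+2c ≤ 2k). -/
def cWalk (hS : IsSawGraph k S) (z : ℕ) (hz : z % 2 = 0) :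
    (c : ℕ) → (hc : z + 2*c ≤ 2*k) → S.Walk ((z+2*c : ℕ) : Fin (2*k+1)) ((z : ℕ) : Fin (2*k+1))
  | 0, _ => Walk.nil
  | c+1, hc => Walk.cons (adj_chord hS (z+2*c) (by omega) (by omega)) (cWalk hS z hz c (by omega))

lemma bWalk_length (hS : IsSawGraph k S) (z d : ℕ) : (bWalk hS z d).length = d := by
  induction d with
  | zero => rfl
  | succ d ih => simp [bWalk, ih]

lemma cWalk_length (hS : IsSawGraph k S) (z : ℕ) (hz : z % 2 = 0) (c : ℕ) (hc : z + 2*c ≤ 2*k) :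
    (cWalk hS z hz c hc).length = c := by
  induction c with
  | zero => rfl
  | succ c ih => simp [cWalk, ih]

lemma bWalk_support_mem (hS : IsSawGraph k S) (z d : ℕ) (h2k : z + d ≤ 2*k) :
    ∀ y ∈ (bWalk hS z d).support, z ≤ y.val ∧ y.val ≤ z + d := by
  induction d with
  | zero =>
    intro y hy
    simp [bWalk] at hy
    subst hy
    rw [Fin.val_cast_of_lt (by omega)]
    omega
  | succ d ih =>
    intro y hy
    simp only [bWalk, Walk.support_cons, List.mem_cons] at hy
    rcases hy with hy | hy
    · subst hy
      rw [Fin.val_cast_of_lt (by omega)]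
      omega
    · have := ih (by omega) y hy
      omega

lemma bWalk_support_nodup (hS : IsSawGraph k S) (z d : ℕ) (h2k : z + d ≤ 2*k) :
    (bWalk hS z d).support.Nodup := by
  induction d with
  | zero => simp [bWalk]
  | succ d ih =>
    simp only [bWalk, Walk.support_cons, List.nodup_cons]
    refine ⟨fun hmem => ?_, ih (by omega)⟩
    have := bWalk_support_mem hS z d (by omega) _ hmem
    rw [Fin.val_cast_of_lt (by omega)] at this
    omega

lemma bWalk_support_tail_mem (hS : IsSawGraph k S) (z d : ℕ) (h2k : z + d ≤ 2*k) :
    ∀ y ∈ (bWalk hS z d).support.tail, z ≤ y.val ∧ y.val + 1 ≤ z + d := by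
  induction d with
  | zero => intro y hy; simp [bWalk] at hy
  | succ d _ =>
    intro y hy
    simp only [bWalk, Walk.support_cons, List.tail_cons] at hy
    have := bWalk_support_mem hS z d (by omega) y hy
    omega

lemma cWalk_support_mem (hS : IsSawGraph k S) (z : ℕ) (hz : z % 2 = 0) (c : ℕ) (hc : z + 2*c ≤ 2*k) :
    ∀ y ∈ (cWalk hS z hz c hc).support, z ≤ y.val ∧ y.val ≤ z + 2*c := by
  induction c with
  | zero =>
    intro y hy
    simp [cWalk] at hy
    subst hy
    rw [Fin.val_cast_of_lt (by omega)]
    omega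
  | succ c ih =>
    intro y hy
    simp only [cWalk, Walk.support_cons, List.mem_cons] at hy
    rcases hy with hy | hy
    · subst hy
      rw [Fin.val_cast_of_lt (by omega)]
      omega
    · have := ih (by omega) y hy
      omega

lemma cWalk_support_nodup (hS : IsSawGraph k S) (z : ℕ) (hz : z % 2 = 0) (c : ℕ) (hc : z + 2*c ≤ 2*k) :
    (cWalk hS z hz c hc).support.Nodup := by
  induction c with
  | zero => simp [cWalk]
  | succ c ih =>
    simp only [cWalk, Walk.support_cons, List.nodup_cons]
    refine ⟨fun hmem => ?_, ih (by omega)⟩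
    have := cWalk_support_mem hS z hz c (by omega) _ hmem
    rw [Fin.val_cast_of_lt (by omega)] at this
    omega

lemma cWalk_support_tail_mem (hS : IsSawGraph k S) (z : ℕ) (hz : z % 2 = 0) (c : ℕ) (hc : z + 2*c ≤ 2*k) :
    ∀ y ∈ (cWalk hS z hz c hc).support.tail, z ≤ y.val ∧ y.val + 2 ≤ z + 2*c := by
  induction c with
  | zero => intro y hy; simp [cWalk] at hy
  | succ c _ =>
    intro y hy
    simp only [cWalk, Walk.support_cons, List.tail_cons] at hy
    have := cWalk_support_mem hS z hz c (by omega) y hy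
    omega


/-- chain-pairing sum bound: if `w x + w (x+t) ≤ 2` for all `x`, then the sum of `w`
over `range M` is at most `M + t`. -/
lemma sum_pair_bound (t : ℕ) (ht : 1 ≤ t) (w : ℕ → ℕ) (hw : ∀ x, w x + w (x + t) ≤ 2) :
    ∀ M : ℕ, ∑ x ∈ Finset.range M, w x ≤ M + t := by
  have hw1 : ∀ x, w x ≤ 2 := fun x => le_trans (Nat.le_add_right _ _) (hw x)
  intro M
  induction M using Nat.strong_induction_on with
  | _ M IH =>
  have hconst : ∀ a b : ℕ, ∑ x ∈ Finset.Ico a b, w x ≤ 2 * (b - a) := by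
    intro a b
    calc ∑ x ∈ Finset.Ico a b, w x ≤ ∑ x ∈ Finset.Ico a b, 2 :=
          Finset.sum_le_sum fun i _ => hw1 i
      _ = 2 * (b - a) := by rw [Finset.sum_const, Nat.card_Ico, smul_eq_mul]; omega
  rcases le_or_gt M t with hM | hM
  · calc ∑ x ∈ Finset.range M, w x = ∑ x ∈ Finset.Ico 0 M, w x := by rw [Finset.range_eq_Ico]
      _ ≤ 2 * (M - 0) := hconst 0 M
      _ ≤ M + t := by omega
  rcases le_or_gt M (2*t) with hM2 | hM2
  · -- t < M ≤ 2t
    have hpair : ∑ x ∈ Finset.Ico 0 (M-t), w x + ∑ x ∈ Finset.Ico t M, w x ≤ 2 * (M - t) := by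
      have hre : ∑ x ∈ Finset.Ico t M, w x = ∑ i ∈ Finset.range (M - t), w (t + i) :=
        Finset.sum_Ico_eq_sum_range w t M
      have hre2 : ∑ x ∈ Finset.Ico 0 (M-t), w x = ∑ i ∈ Finset.range (M - t), w i := by
        rw [← Finset.range_eq_Ico]
      rw [hre, hre2, ← Finset.sum_add_distrib]
      calc ∑ i ∈ Finset.range (M-t), (w i + w (t + i)) ≤ ∑ i ∈ Finset.range (M-t), 2 := by
            refine Finset.sum_le_sum fun i _ => ?_
            have := hw i
            rw [Nat.add_comm i t] at this
            exact this
        _ = 2 * (M - t) := by rw [Finset.sum_const, Finset.card_range, smul_eq_mul]; omega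
    have hsplit1 : ∑ x ∈ Finset.Ico 0 (M-t), w x + ∑ x ∈ Finset.Ico (M-t) t, w x
        = ∑ x ∈ Finset.Ico 0 t, w x := Finset.sum_Ico_consecutive w (by omega) (by omega)
    have hsplit2 : ∑ x ∈ Finset.Ico 0 t, w x + ∑ x ∈ Finset.Ico t M, w x
        = ∑ x ∈ Finset.Ico 0 M, w x := Finset.sum_Ico_consecutive w (by omega) (by omega)
    have hmid := hconst (M-t) t
    calc ∑ x ∈ Finset.range M, w x = ∑ x ∈ Finset.Ico 0 M, w x := by rw [Finset.range_eq_Ico]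
      _ ≤ 2 * (M-t) + 2 * (t - (M-t)) := by omega
      _ ≤ M + t := by omega
  · -- M > 2t
    have hIH := IH (M - 2*t) (by omega)
    have hsplit : ∑ x ∈ Finset.Ico 0 (M-2*t), w x + ∑ x ∈ Finset.Ico (M-2*t) M, w x
        = ∑ x ∈ Finset.Ico 0 M, w x := Finset.sum_Ico_consecutive w (by omega) (by omega)
    have hsplit2 : ∑ x ∈ Finset.Ico (M-2*t) (M-t), w x + ∑ x ∈ Finset.Ico (M-t) M, w x
        = ∑ x ∈ Finset.Ico (M-2*t) M, w x := Finset.sum_Ico_consecutive w (by omega) (by omega)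
    have hwin : ∑ x ∈ Finset.Ico (M-2*t) (M-t), w x + ∑ x ∈ Finset.Ico (M-t) M, w x ≤ 2*t := by
      have hre1 : ∑ x ∈ Finset.Ico (M-2*t) (M-t), w x
          = ∑ i ∈ Finset.range t, w ((M-2*t) + i) := by
        rw [Finset.sum_Ico_eq_sum_range]
        have h9 : M - t - (M - 2*t) = t := by omega
        rw [h9]
      have hre2 : ∑ x ∈ Finset.Ico (M-t) M, w x
          = ∑ i ∈ Finset.range t, w (((M-2*t) + i) + t) := by
        rw [Finset.sum_Ico_eq_sum_range]
        have : M - (M - t) = t := by omega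
        rw [this]
        refine Finset.sum_congr rfl fun i _ => ?_
        congr 1
        omega
      rw [hre1, hre2, ← Finset.sum_add_distrib]
      calc ∑ i ∈ Finset.range t, (w ((M-2*t)+i) + w ((M-2*t)+i+t))
          ≤ ∑ _i ∈ Finset.range t, 2 := Finset.sum_le_sum fun i _ => hw _
        _ = 2*t := by rw [Finset.sum_const, Finset.card_range, smul_eq_mul]; omega
    have hfirst : ∑ x ∈ Finset.Ico 0 (M-2*t), w x ≤ (M - 2*t) + t := by
      rw [Finset.range_eq_Ico] at hIH; exact hIH
    calc ∑ x ∈ Finset.range M, w x = ∑ x ∈ Finset.Ico 0 M, w x := by rw [Finset.range_eq_Ico]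
      _ ≤ M + t := by omega


/-- the middle walk: from `z+f+2c+e` go `e` backbone steps, then `c` chord steps, then
`f` backbone steps down to `z`. -/
def midWalk (hS : IsSawGraph k S) (z f c e : ℕ) (hp : (z+f) % 2 = 0) (h2k : z+f+2*c+e ≤ 2*k) :
    S.Walk ((z+f+2*c+e : ℕ) : Fin (2*k+1)) ((z : ℕ) : Fin (2*k+1)) :=
  (bWalk hS (z+f+2*c) e).append ((cWalk hS (z+f) hp c (by omega)).append (bWalk hS z f))

lemma midWalk_length (hS : IsSawGraph k S) (z f c e : ℕ) (hp : (z+f) % 2 = 0) (h2k : z+f+2*c+e ≤ 2*k) :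
    (midWalk hS z f c e hp h2k).length = e + c + f := by
  simp [midWalk, Walk.length_append, bWalk_length, cWalk_length]
  omega

lemma midWalk_support_mem (hS : IsSawGraph k S) (z f c e : ℕ) (hp : (z+f) % 2 = 0) (h2k : z+f+2*c+e ≤ 2*k) :
    ∀ y ∈ (midWalk hS z f c e hp h2k).support, z ≤ y.val ∧ y.val ≤ z+f+2*c+e := by
  intro y hy
  simp only [midWalk, Walk.mem_support_append_iff] at hy
  rcases hy with hy | hy | hy
  · have := bWalk_support_mem hS (z+f+2*c) e (by omega) y hy
    omega
  · have := cWalk_support_mem hS (z+f) hp c (by omega) y hy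
    omega
  · have := bWalk_support_mem hS z f (by omega) y hy
    omega

lemma midWalk_support_nodup (hS : IsSawGraph k S) (z f c e : ℕ) (hp : (z+f) % 2 = 0) (h2k : z+f+2*c+e ≤ 2*k) :
    (midWalk hS z f c e hp h2k).support.Nodup := by
  have hinner : ((cWalk hS (z+f) hp c (by omega : z+f+2*c ≤ 2*k)).append (bWalk hS z f)).support.Nodup := by
    rw [Walk.support_append]
    refine List.Nodup.append (cWalk_support_nodup hS (z+f) hp c (by omega)) ((bWalk_support_nodup hS z f (by omega)).tail) ?_
    intro y hy hy'
    have h1 := cWalk_support_mem hS (z+f) hp c (by omega) y hy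
    have h2 := bWalk_support_tail_mem hS z f (by omega) y hy'
    omega
  rw [midWalk, Walk.support_append]
  refine List.Nodup.append (bWalk_support_nodup hS (z+f+2*c) e (by omega)) hinner.tail ?_
  intro y hy hy'
  have h1 := bWalk_support_mem hS (z+f+2*c) e (by omega) y hy
  -- y ∈ tail of (cWalk.append bWalk).support
  have hy'' : y ∈ ((cWalk hS (z+f) hp c (by omega : z+f+2*c ≤ 2*k)).support.tail ++ (bWalk hS z f).support.tail) := by
    have hs : ((cWalk hS (z+f) hp c (by omega : z+f+2*c ≤ 2*k)).append (bWalk hS z f)).support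
        = ((z+f+2*c : ℕ) : Fin (2*k+1)) :: ((cWalk hS (z+f) hp c (by omega)).support.tail ++ (bWalk hS z f).support.tail) := by
      rw [Walk.support_append]
      conv_lhs => rw [Walk.support_eq_cons]
      rw [List.cons_append]
    rw [hs] at hy'
    exact hy' 
  rcases List.mem_append.mp hy'' with h | h
  · have := cWalk_support_tail_mem hS (z+f) hp c (by omega) y h
    omega
  · have := bWalk_support_tail_mem hS z f (by omega) y h
    omega

lemma build_desc (hS : IsSawGraph k S) (hk : 1 ≤ k) (z f c e x q : ℕ)
    (hx : x = z+f+2*c+e) (hp : (z+f) % 2 = 0) (hub : x + 2 ≤ 2*k)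
    (hux : S.Adj ((2*k-1 : ℕ) : Fin (2*k+1)) ((x : ℕ) : Fin (2*k+1)))
    (hzv : S.Adj ((z : ℕ) : Fin (2*k+1)) ((2*k : ℕ) : Fin (2*k+1)))
    (hq : q = e+c+f+3) :
    q ∈ pathOrders S ((2*k-1 : ℕ) : Fin (2*k+1)) ((2*k : ℕ) : Fin (2*k+1)) := by
  subst hx
  have h2k : z+f+2*c+e ≤ 2*k := by omega
  set u : Fin (2*k+1) := ((2*k-1 : ℕ) : Fin (2*k+1)) with hu
  set v : Fin (2*k+1) := ((2*k : ℕ) : Fin (2*k+1)) with hv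
  have huval : u.val = 2*k-1 := Fin.val_cast_of_lt (by omega)
  have hvval : v.val = 2*k := Fin.val_cast_of_lt (by omega)
  refine ⟨Walk.cons hux ((midWalk hS z f c e hp h2k).append (Walk.cons hzv Walk.nil)), ?_, ?_⟩
  · rw [Walk.isPath_def, Walk.support_cons, Walk.support_append]
    simp only [Walk.support_cons, Walk.support_nil, List.tail_cons, List.nodup_cons]
    constructor
    · intro hmem
      rcases List.mem_append.mp hmem with h | h
      · have := midWalk_support_mem hS z f c e hp h2k u h
        omega
      · simp only [List.mem_singleton] at h
        rw [h] at huval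
        rw [hvval] at huval
        omega
    · refine List.Nodup.append (midWalk_support_nodup hS z f c e hp h2k) (List.nodup_singleton _) ?_
      intro y hy hy'
      simp only [List.mem_singleton] at hy'
      rw [hy'] at hy
      have := midWalk_support_mem hS z f c e hp h2k v hy
      omega
  · simp only [Walk.length_cons, Walk.length_append, Walk.length_nil,
      midWalk_length hS z f c e hp h2k]
    omega

lemma build_asc (hS : IsSawGraph k S) (hk : 1 ≤ k) (z f c e x q : ℕ)
    (hx : x = z+f+2*c+e) (hp : (z+f) % 2 = 0) (hub : x + 2 ≤ 2*k)
    (hux : S.Adj ((2*k-1 : ℕ) : Fin (2*k+1)) ((z : ℕ) : Fin (2*k+1)))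
    (hzv : S.Adj ((x : ℕ) : Fin (2*k+1)) ((2*k : ℕ) : Fin (2*k+1)))
    (hq : q = e+c+f+3) :
    q ∈ pathOrders S ((2*k-1 : ℕ) : Fin (2*k+1)) ((2*k : ℕ) : Fin (2*k+1)) := by
  subst hx
  have h2k : z+f+2*c+e ≤ 2*k := by omega
  set u : Fin (2*k+1) := ((2*k-1 : ℕ) : Fin (2*k+1)) with hu
  set v : Fin (2*k+1) := ((2*k : ℕ) : Fin (2*k+1)) with hv
  have huval : u.val = 2*k-1 := Fin.val_cast_of_lt (by omega)
  have hvval : v.val = 2*k := Fin.val_cast_of_lt (by omega)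
  refine ⟨Walk.cons hux ((midWalk hS z f c e hp h2k).reverse.append (Walk.cons hzv Walk.nil)), ?_, ?_⟩
  · rw [Walk.isPath_def, Walk.support_cons, Walk.support_append, Walk.support_reverse]
    simp only [Walk.support_cons, Walk.support_nil, List.tail_cons, List.nodup_cons]
    constructor
    · intro hmem
      rcases List.mem_append.mp hmem with h | h
      · rw [List.mem_reverse] at h
        have := midWalk_support_mem hS z f c e hp h2k u h
        omega
      · simp only [List.mem_singleton] at h
        rw [h] at huval
        rw [hvval] at huval
        omega
    · refine List.Nodup.append (List.nodup_reverse.mpr (midWalk_support_nodup hS z f c e hp h2k)) (List.nodup_singleton _) ?_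
      intro y hy hy'
      simp only [List.mem_singleton] at hy'
      rw [hy'] at hy
      rw [List.mem_reverse] at hy
      have := midWalk_support_mem hS z f c e hp h2k v hy
      omega
  · simp only [Walk.length_cons, Walk.length_append, Walk.length_reverse, Walk.length_nil,
      midWalk_length hS z f c e hp h2k]
    omega

end SawAux

namespace Counting

lemma counting (k t D : ℕ) (hk : 3 ≤ k) (ht : 1 ≤ t) (ht2 : t + 2 ≤ k)
    (hD : 4*k + 2 ≤ 3*D)
    (U V : Finset ℕ) (hU : ∀ y ∈ U, y < 2*k-1) (hV : ∀ y ∈ V, y < 2*k-1)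
    (h0 : 0 ∈ V) (htop : 2*k-2 ∈ V)
    (hcU : D ≤ U.card + 1) (hcV : D ≤ V.card + 1) :
    ∃ x ∈ U, ∃ z ∈ V, (t ≤ x - z ∧ x - z + 1 ≤ 2*t) ∨ (t ≤ z - x ∧ z - x + 1 ≤ 2*t) := by
  by_contra hcon
  have hF : ∀ x ∈ U, ∀ z ∈ V,
      ¬((t ≤ x - z ∧ x - z + 1 ≤ 2*t) ∨ (t ≤ z - x ∧ z - x + 1 ≤ 2*t)) :=
    fun x hx z hz h => hcon ⟨x, hx, z, hz, h⟩
  classical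
  set w : ℕ → ℕ := fun x => (if x ∈ U then 1 else 0) + (if x ∈ V then 1 else 0) with hwdef
  have hw : ∀ x, w x + w (x + t) ≤ 2 := by
    intro x
    have h1 : ¬(x ∈ U ∧ x + t ∈ V) := by
      rintro ⟨a, b⟩
      exact hF x a (x+t) b (Or.inr ⟨by omega, by omega⟩)
    have h2 : ¬(x ∈ V ∧ x + t ∈ U) := by
      rintro ⟨a, b⟩
      exact hF (x+t) b x a (Or.inl ⟨by omega, by omega⟩)
    have e1 : w x = (if x ∈ U then 1 else 0) + (if x ∈ V then 1 else 0) := rfl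
    have e2 : w (x+t) = (if x+t ∈ U then 1 else 0) + (if x+t ∈ V then 1 else 0) := rfl
    rw [e1, e2]
    by_cases hxU : x ∈ U <;> by_cases hxV : x ∈ V <;>
      by_cases hyU : x + t ∈ U <;> by_cases hyV : x + t ∈ V <;>
      simp only [hxU, hxV, hyU, hyV, if_true, if_false] <;>
      try omega
    all_goals (exfalso; tauto)
  have hsum : U.card + V.card = ∑ x ∈ Finset.range (2*k-1), w x := by
    simp only [hwdef]
    rw [Finset.sum_add_distrib, Finset.sum_ite_mem, Finset.sum_ite_mem,
      Finset.inter_eq_right.mpr (fun y hy => Finset.mem_range.mpr (hU y hy)),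
      Finset.inter_eq_right.mpr (fun y hy => Finset.mem_range.mpr (hV y hy))]
    simp only [Finset.sum_const, smul_eq_mul, mul_one]
  have hbound := SawAux.sum_pair_bound t ht w hw (2*k-1)
  have hI1 : ∀ y ∈ U, ¬(t ≤ y ∧ y < 2*t) := by
    intro y hy h
    exact hF y hy 0 h0 (Or.inl ⟨by omega, by omega⟩)
  have hI2 : ∀ y ∈ U, ¬(2*k-1-2*t ≤ y ∧ y < 2*k-1-t) := by
    intro y hy h
    have hyb : y < 2*k-1 := hU y hy
    exact hF y hy (2*k-2) htop (Or.inr ⟨by omega, by omega⟩)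
  set J : Finset ℕ := Finset.Ico t (2*t) ∪ Finset.Ico (2*k-1-2*t) (2*k-1-t) with hJdef
  have hJsub : J ⊆ Finset.range (2*k-1) := by
    intro y hy
    rw [hJdef, Finset.mem_union, Finset.mem_Ico, Finset.mem_Ico] at hy
    rw [Finset.mem_range]
    omega
  have hUsub : U ⊆ Finset.range (2*k-1) \ J := by
    intro y hy
    rw [Finset.mem_sdiff, Finset.mem_range, hJdef, Finset.mem_union, Finset.mem_Ico,
      Finset.mem_Ico]
    refine ⟨hU y hy, fun h => ?_⟩
    rcases h with h | h
    · exact hI1 y hy h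
    · exact hI2 y hy h
  have hcard1 : U.card ≤ (Finset.range (2*k-1)).card - J.card :=
    le_trans (Finset.card_le_card hUsub) (le_of_eq (Finset.card_sdiff_of_subset hJsub))
  rw [Finset.card_range] at hcard1
  have hJcard := Finset.card_union_add_card_inter (Finset.Ico t (2*t))
    (Finset.Ico (2*k-1-2*t) (2*k-1-t))
  rw [Finset.Ico_inter_Ico, Nat.card_Ico, Nat.card_Ico, Nat.card_Ico] at hJcard
  rw [← hJdef] at hJcard
  omega

end Counting


/-- Let `S` be a saw with backbone `(v₁, ..., v_{2k+1}, v₁)` whose degree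
`d(S) = min(deg v_{2k}, deg v_{2k+1})` satisfies `d(S) ≥ 2(2k + 1)/3`
(stated multiplied out as `3 · d(S) ≥ 2(2k + 1)`). Then
`[2, 2k + 1] ⊆ R_S(v_{2k}, v_{2k+1})` (0-indexed: vertices `2k − 1` and `2k`). -/
theorem saw_large_degree_path_orders (k : ℕ) (hk : 1 ≤ k)
    (S : SimpleGraph (Fin (2 * k + 1))) [DecidableRel S.Adj] (hS : IsSawGraph k S)
    (hdeg : 2 * (2 * k + 1) ≤ 3 * min (S.degree ((2 * k - 1 : ℕ) : Fin (2 * k + 1)))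
        (S.degree ((2 * k : ℕ) : Fin (2 * k + 1)))) :
    ∀ q : ℕ, 2 ≤ q → q ≤ 2 * k + 1 →
      q ∈ pathOrders S ((2 * k - 1 : ℕ) : Fin (2 * k + 1))
        ((2 * k : ℕ) : Fin (2 * k + 1)) := by
  intro q hq2 hq
  classical
  set u : Fin (2*k+1) := ((2*k-1 : ℕ) : Fin (2*k+1)) with hu
  set v : Fin (2*k+1) := ((2*k : ℕ) : Fin (2*k+1)) with hv
  have huval : u.val = 2*k-1 := Fin.val_cast_of_lt (by omega)
  have hvval : v.val = 2*k := Fin.val_cast_of_lt (by omega)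
  have huv : S.Adj u v := by
    have h := SawAux.adj_succ hS (2*k-1)
    have he : 2*k-1+1 = 2*k := by omega
    rw [he] at h
    exact h
  have hu_top : S.Adj u ((2*k-2 : ℕ) : Fin (2*k+1)) := by
    have h := SawAux.adj_succ hS (2*k-2)
    have he : 2*k-2+1 = 2*k-1 := by omega
    rw [he] at h
    exact h.symm
  have htop_v : S.Adj ((2*k-2 : ℕ) : Fin (2*k+1)) v := by
    have h := SawAux.adj_chord hS (2*k-2) (by omega) (by omega)
    have he : 2*k-2+2 = 2*k := by omega
    rw [he] at h
    exact h.symm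
  have h0v : S.Adj ((0 : ℕ) : Fin (2*k+1)) v := by
    have h := SawAux.adj_succ hS (2*k)
    have he : ((2*k+1 : ℕ) : Fin (2*k+1)) = ((0:ℕ) : Fin (2*k+1)) := by
      rw [Fin.natCast_self, Nat.cast_zero]
    rw [he] at h
    exact h.symm
  by_cases hq3 : q ≤ 3
  · rcases (by omega : q = 2 ∨ q = 3) with rfl | rfl
    · refine ⟨Walk.cons huv Walk.nil, ?_, by simp⟩
      rw [Walk.isPath_def]
      simp only [Walk.support_cons, Walk.support_nil, List.nodup_cons, List.mem_singleton,
        List.not_mem_nil, not_false_iff, List.nodup_nil, and_true]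
      intro h
      rw [h, hvval] at huval
      omega
    · exact SawAux.build_desc hS hk (2*k-2) 0 0 0 (2*k-2) 3 (by omega) (by omega) (by omega)
        hu_top htop_v (by omega)
  · by_cases hqk : k+2 ≤ q
    · -- anchor case : q ∈ [k+2, 2k+1]
      exact SawAux.build_desc hS hk 0 (2*q-(2*k+4)) (2*k+1-q) 0 (2*k-2) q
        (by omega) (by omega) (by omega) hu_top h0v (by omega)
    · -- counting case : q ∈ [4, k+1]
      have hk3 : 3 ≤ k := by omega
      set U : Finset ℕ := ((S.neighborFinset u).erase v).image Fin.val with hUdef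
      set W : Finset ℕ := ((S.neighborFinset v).erase u).image Fin.val with hWdef
      have hUmem : ∀ y ∈ U, y < 2*k-1 := by
        intro y hy
        rw [hUdef] at hy
        simp only [Finset.mem_image, Finset.mem_erase, SimpleGraph.mem_neighborFinset] at hy
        obtain ⟨w, ⟨hwv, hadj⟩, rfl⟩ := hy
        have h1 : w ≠ u := hadj.ne'
        have h2 : w.val ≠ 2*k := fun h => hwv (by apply Fin.ext; rw [h, hvval])
        have h3 : w.val ≠ 2*k-1 := fun h => h1 (by apply Fin.ext; rw [h, huval])
        have h4 := w.isLt
        omega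
      have hWmem : ∀ y ∈ W, y < 2*k-1 := by
        intro y hy
        rw [hWdef] at hy
        simp only [Finset.mem_image, Finset.mem_erase, SimpleGraph.mem_neighborFinset] at hy
        obtain ⟨w, ⟨hwu, hadj⟩, rfl⟩ := hy
        have h1 : w ≠ v := hadj.ne'
        have h2 : w.val ≠ 2*k := fun h => h1 (by apply Fin.ext; rw [h, hvval])
        have h3 : w.val ≠ 2*k-1 := fun h => hwu (by apply Fin.ext; rw [h, huval])
        have h4 := w.isLt
        omega
      have hUadj : ∀ y ∈ U, S.Adj u ((y : ℕ) : Fin (2*k+1)) := by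
        intro y hy
        rw [hUdef] at hy
        simp only [Finset.mem_image, Finset.mem_erase, SimpleGraph.mem_neighborFinset] at hy
        obtain ⟨w, ⟨_, hadj⟩, rfl⟩ := hy
        rwa [Fin.cast_val_eq_self]
      have hWadj : ∀ y ∈ W, S.Adj v ((y : ℕ) : Fin (2*k+1)) := by
        intro y hy
        rw [hWdef] at hy
        simp only [Finset.mem_image, Finset.mem_erase, SimpleGraph.mem_neighborFinset] at hy
        obtain ⟨w, ⟨_, hadj⟩, rfl⟩ := hy
        rwa [Fin.cast_val_eq_self]
      have hUcard : S.degree u ≤ U.card + 1 := by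
        rw [hUdef, Finset.card_image_of_injective _ Fin.val_injective,
          Finset.card_erase_of_mem (by rw [SimpleGraph.mem_neighborFinset]; exact huv)]
        have hpos : 0 < (S.neighborFinset u).card :=
          Finset.card_pos.mpr ⟨v, by rw [SimpleGraph.mem_neighborFinset]; exact huv⟩
        rw [SimpleGraph.degree]
        omega
      have hWcard : S.degree v ≤ W.card + 1 := by
        rw [hWdef, Finset.card_image_of_injective _ Fin.val_injective,
          Finset.card_erase_of_mem (by rw [SimpleGraph.mem_neighborFinset]; exact huv.symm)]
        have hpos : 0 < (S.neighborFinset v).card :=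
          Finset.card_pos.mpr ⟨u, by rw [SimpleGraph.mem_neighborFinset]; exact huv.symm⟩
        rw [SimpleGraph.degree]
        omega
      have h0W : 0 ∈ W := by
        rw [hWdef]
        simp only [Finset.mem_image, Finset.mem_erase, SimpleGraph.mem_neighborFinset]
        refine ⟨((0:ℕ) : Fin (2*k+1)), ⟨fun h => ?_, h0v.symm⟩, Fin.val_cast_of_lt (by omega)⟩
        have := congrArg Fin.val h
        rw [Fin.val_cast_of_lt (by omega : (0:ℕ) < 2*k+1), huval] at this
        omega
      have htopW : 2*k-2 ∈ W := by
        rw [hWdef]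
        simp only [Finset.mem_image, Finset.mem_erase, SimpleGraph.mem_neighborFinset]
        refine ⟨((2*k-2:ℕ) : Fin (2*k+1)), ⟨fun h => ?_, htop_v.symm⟩,
          Fin.val_cast_of_lt (by omega)⟩
        have := congrArg Fin.val h
        rw [Fin.val_cast_of_lt (by omega : 2*k-2 < 2*k+1), huval] at this
        omega
      obtain ⟨x, hxU, z, hzW, hcase⟩ :=
        Counting.counting k (q-3) (min (S.degree u) (S.degree v)) hk3 (by omega) (by omega)
          (by omega) U W hUmem hWmem h0W htopW
          (le_trans (min_le_left _ _) hUcard) (le_trans (min_le_right _ _) hWcard)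
      have hxb : x < 2*k-1 := hUmem x hxU
      have hzb : z < 2*k-1 := hWmem z hzW
      rcases hcase with ⟨h1, h2⟩ | ⟨h1, h2⟩
      · exact SawAux.build_desc hS hk z (2*(q-3) - (x-z) - x%2) ((x-z) - (q-3)) (x%2) x q
          (by omega) (by omega) (by omega) (hUadj x hxU) ((hWadj z hzW).symm) (by omega)
      · exact SawAux.build_asc hS hk x (x%2) ((z-x) - (q-3)) (2*(q-3) - (z-x) - x%2) z q
          (by omega) (by omega) (by omega) (hUadj x hxU) ((hWadj z hzW).symm) (by omega)
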